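/- Let C = {r ∈ ℝ^T : 0 ≤ r ≤ r̄, Σ_t c r(t) = d} with c > 0, r̄ > 0 componentwise, and 0 < d < c Σ_t r̄(t). Then the Euclidean projection of any x ∈ ℝ^T onto C exists and is unique, and it is characterized by: Π_C(x)(t) = clamp(x(t) + ν, 0, r̄(t)) for some ν ∈ ℝ chosen so that the equality constraint Σ_t c · clamp(x(t)+ν, 0, r̄(t)) = d holds. -/

import Mathlib

/-! Clamping is the coordinatewise projection onto the box, so `p = clamp (x + ν) 0 r̄` satisfies
`(x t + ν - p t) * (z t - p t) ≤ 0` for every `z` in the box. If `z` also lies on the hyperplane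
then `∑ t, (z t - p t) = 0`, so the shift `ν` drops out after summing and `⟪x - p, z - p⟫ ≤ 0`:
this variational inequality makes `p` the unique nearest point of `C`. A suitable `ν` exists by
the intermediate value theorem, since `ν ↦ ∑ t, clamp (x t + ν) 0 (r̄ t)` is continuous and runs
from `0` to `∑ t, r̄ t`. -/

open Finset RealInnerProductSpace

section NearestPoint

variable {E : Type*} [NormedAddCommGroup E] [InnerProductSpace ℝ E]

theorem sq_norm_sub_add_sq_norm_sub_le_of_inner_le_zero {x p z : E}
    (h : ⟪x - p, z - p⟫ ≤ 0) : ‖x - p‖ ^ 2 + ‖p - z‖ ^ 2 ≤ ‖x - z‖ ^ 2 := by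
  have hsplit : x - z = (x - p) + (p - z) := by abel
  have hneg : ⟪x - p, p - z⟫ = -⟪x - p, z - p⟫ := by
    rw [← inner_neg_right, neg_sub]
  rw [hsplit, norm_add_sq_real, hneg]
  linarith

theorem nearest_iff_eq_of_inner_le_zero {K : Set E} {x p : E} (hp : p ∈ K)
    (h : ∀ z ∈ K, ⟪x - p, z - p⟫ ≤ 0) (q : E) :
    (q ∈ K ∧ ∀ z ∈ K, dist x q ≤ dist x z) ↔ q = p := by
  constructor
  · rintro ⟨hq, hq_le⟩
    have hpyth := sq_norm_sub_add_sq_norm_sub_le_of_inner_le_zero (h q hq)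
    have hle : ‖x - q‖ ≤ ‖x - p‖ := by simpa only [dist_eq_norm] using hq_le p hp
    have hpq : ‖p - q‖ = 0 := by
      nlinarith [norm_nonneg (x - q), norm_nonneg (p - q)]
    exact (sub_eq_zero.mp (norm_eq_zero.mp hpq)).symm
  · rintro rfl
    refine ⟨hp, fun z hz => ?_⟩
    have hpyth := sq_norm_sub_add_sq_norm_sub_le_of_inner_le_zero (h z hz)
    rw [dist_eq_norm, dist_eq_norm,
      ← pow_le_pow_iff_left₀ (norm_nonneg _) (norm_nonneg _) two_ne_zero]
    nlinarith [sq_nonneg ‖q - z‖]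

end NearestPoint

section Clamp

theorem sub_clamp_mul_sub_clamp_nonpos {l u y z : ℝ} (hz : z ∈ Set.Icc l u) :
    (y - min (max y l) u) * (z - min (max y l) u) ≤ 0 := by
  obtain ⟨hlz, hzu⟩ := hz
  rcases le_total y l with hyl | hly
  · rw [max_eq_right hyl, min_eq_left (hlz.trans hzu)]
    exact mul_nonpos_of_nonpos_of_nonneg (by linarith) (by linarith)
  rcases le_total y u with hyu | huy
  · rw [max_eq_left hly, min_eq_left hyu, sub_self, zero_mul]
  · rw [max_eq_left hly, min_eq_right huy]
    exact mul_nonpos_of_nonneg_of_nonpos (by linarith) (by linarith)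

variable {ι : Type*} [Fintype ι]

theorem exists_sum_clamp_add_eq (y l u : ι → ℝ) (hlu : ∀ i, l i ≤ u i) {s : ℝ}
    (hs : s ∈ Set.Icc (∑ i, l i) (∑ i, u i)) :
    ∃ ν, ∑ i, min (max (y i + ν) (l i)) (u i) = s := by
  obtain ⟨M, hM⟩ := Finite.bddAbove_range fun i => y i - l i
  obtain ⟨N, hN⟩ := Finite.bddAbove_range fun i => u i - y i
  have hlow : ∑ i, min (max (y i + -M) (l i)) (u i) = ∑ i, l i := by
    refine sum_congr rfl fun i _ => ?_
    have : y i - l i ≤ M := hM ⟨i, rfl⟩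
    rw [max_eq_right (by linarith), min_eq_left (hlu i)]
  have hhigh : ∑ i, min (max (y i + N) (l i)) (u i) = ∑ i, u i := by
    refine sum_congr rfl fun i _ => ?_
    have : u i - y i ≤ N := hN ⟨i, rfl⟩
    exact min_eq_right ((by linarith : u i ≤ y i + N).trans (le_max_left _ _))
  have hcont : Continuous fun ν => ∑ i, min (max (y i + ν) (l i)) (u i) := by fun_prop
  rw [← hlow, ← hhigh] at hs
  exact intermediate_value_univ (-M) N hcont hs

theorem inner_sub_clamp_nonpos (x z : EuclideanSpace ℝ ι) (l u : ι → ℝ) (ν : ℝ)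
    (hz : ∀ i, z i ∈ Set.Icc (l i) (u i))
    (hsum : ∑ i, z i = ∑ i, min (max (x i + ν) (l i)) (u i)) :
    ⟪x - WithLp.toLp 2 (fun i => min (max (x i + ν) (l i)) (u i)),
      z - WithLp.toLp 2 (fun i => min (max (x i + ν) (l i)) (u i))⟫ ≤ 0 := by
  set p : ι → ℝ := fun i => min (max (x i + ν) (l i)) (u i)
  have hshift : ∑ i, (x i - p i) * (z i - p i)
      = ∑ i, (x i + ν - p i) * (z i - p i) - ν * ∑ i, (z i - p i) := by
    rw [mul_sum, ← sum_sub_distrib]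
    exact sum_congr rfl fun i _ => by ring
  have hzero : ∑ i, (z i - p i) = 0 := by rw [sum_sub_distrib, hsum, sub_self]
  simp only [PiLp.inner_apply, PiLp.sub_apply, Real.inner_apply]
  rw [hshift, hzero, mul_zero, sub_zero]
  exact sum_nonpos fun i _ => sub_clamp_mul_sub_clamp_nonpos (hz i)

end Clamp

/-- Let `C = {r ∈ ℝ^T : 0 ≤ r ≤ r̄, ∑ t, c * r t = d}` with `c > 0`, `r̄ > 0` componentwise,
and `0 < d < c * ∑ t, r̄ t`. Then the Euclidean projection of any `x ∈ ℝ^T` onto `C` exists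
and is unique, and every projection is characterized by
`Π_C(x) t = clamp (x t + ν) 0 (r̄ t)` for some `ν ∈ ℝ` chosen so that the equality
constraint `∑ t, c * clamp (x t + ν) 0 (r̄ t) = d` holds. -/
theorem projection_box_hyperplane_clamp
    (T : ℕ) (c d : ℝ) (hc : 0 < c)
    (rbar : EuclideanSpace ℝ (Fin T)) (hrbar : ∀ t, 0 < rbar t)
    (hd0 : 0 < d) (hd1 : d < c * ∑ t, rbar t)
    (x : EuclideanSpace ℝ (Fin T)) :
    (∃! p : EuclideanSpace ℝ (Fin T),
        (p ∈ {r : EuclideanSpace ℝ (Fin T) |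
            (∀ t, 0 ≤ r t ∧ r t ≤ rbar t) ∧ ∑ t, c * r t = d} ∧
          ∀ z ∈ {r : EuclideanSpace ℝ (Fin T) |
              (∀ t, 0 ≤ r t ∧ r t ≤ rbar t) ∧ ∑ t, c * r t = d},
            dist x p ≤ dist x z)) ∧
      ∀ p : EuclideanSpace ℝ (Fin T),
        (p ∈ {r : EuclideanSpace ℝ (Fin T) |
            (∀ t, 0 ≤ r t ∧ r t ≤ rbar t) ∧ ∑ t, c * r t = d} ∧
          ∀ z ∈ {r : EuclideanSpace ℝ (Fin T) |
              (∀ t, 0 ≤ r t ∧ r t ≤ rbar t) ∧ ∑ t, c * r t = d},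
            dist x p ≤ dist x z) →
        ∃ ν : ℝ, (∀ t, p t = min (max (x t + ν) 0) (rbar t)) ∧
          ∑ t, c * min (max (x t + ν) 0) (rbar t) = d := by
  set K := {r : EuclideanSpace ℝ (Fin T) | (∀ t, 0 ≤ r t ∧ r t ≤ rbar t) ∧ ∑ t, c * r t = d}
  have hds : d / c ∈ Set.Icc (∑ _t : Fin T, (0 : ℝ)) (∑ t, rbar t) := by
    rw [sum_const_zero, Set.mem_Icc, le_div_iff₀ hc, div_le_iff₀ hc]
    constructor <;> linarith
  obtain ⟨ν, hν⟩ := exists_sum_clamp_add_eq x (fun _ => 0) rbar (fun t => (hrbar t).le) hds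
  set p := WithLp.toLp 2 fun t => min (max (x t + ν) 0) (rbar t)
  have hνd : ∑ t, c * min (max (x t + ν) 0) (rbar t) = d := by
    rw [← mul_sum, hν, mul_div_cancel₀ _ hc.ne']
  have hpK : p ∈ K := ⟨fun t => ⟨le_min (le_max_right _ _) (hrbar t).le, min_le_right _ _⟩, hνd⟩
  have hinner : ∀ z ∈ K, ⟪x - p, z - p⟫ ≤ 0 := by
    rintro z ⟨hbox, hzd⟩
    refine inner_sub_clamp_nonpos x z (fun _ => 0) rbar ν hbox (mul_left_cancel₀ hc.ne' ?_)
    rw [mul_sum, mul_sum, hzd, hνd]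
  have hnearest := nearest_iff_eq_of_inner_le_zero hpK hinner
  exact ⟨⟨p, (hnearest p).2 rfl, fun q hq => (hnearest q).1 hq⟩,
    fun q hq => ⟨ν, fun t => by rw [(hnearest q).1 hq], hνd⟩⟩
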